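/- Let u(x) = (1−x)^γ(1+x)^δ with γ > 1, δ ≥ 0, and for even n = 2lν, m = 2lμ (0 < μ < ν coprime, l ∈ ℕ) let V_n^m be the VP interpolation operator at the zeros of the n-th Chebyshev polynomial of the first kind. Then the weighted Lebesgue constants ∥V_n^m∥_u = sup_{|x|≤1} u(x) ∑_{k=1}^n |Φ_{n,k}^m(x)|/u(x_k) satisfy ∥V_n^m∥_u ≥ C n^{2γ−2} for some C > 0 independent of l; in particular sup_l ∥V_n^m∥_u = ∞. -/

import Mathlib

open Real

/-- Orthonormal Chebyshev polynomials of the first kind, as functions on `[-1,1]`: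
`p₀ = 1/√π`, `p_j(cos t) = √(2/π) cos(jt)` for `j ≥ 1`. -/
noncomputable def chebP1 (j : ℕ) (x : ℝ) : ℝ :=
  if j = 0 then 1 / Real.sqrt π else Real.sqrt (2 / π) * Real.cos (j * Real.arccos x)

/-- The de la Vallée Poussin filter. -/
noncomputable def vpFilter (n m j : ℕ) : ℝ :=
  if j + m ≤ n then 1 else ((n : ℝ) + m - j) / (2 * m)

/-- Chebyshev nodes of the first kind: `t_k = (2k-1)π/(2n)`. -/
noncomputable def chebNode1 (n k : ℕ) : ℝ := (2 * (k : ℝ) - 1) * π / (2 * n)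

/-- Fundamental VP polynomials for `w₁`. -/
noncomputable def vpPhi1 (n m k : ℕ) (x : ℝ) : ℝ :=
  (π / n) * ∑ j ∈ Finset.range (n + m),
    vpFilter n m j * chebP1 j x * chebP1 j (Real.cos (chebNode1 n k))


/-- The Jacobi weight `u(x) = (1-x)^γ (1+x)^δ`. -/
noncomputable def jacobiU (γ δ x : ℝ) : ℝ := (1 - x) ^ γ * (1 + x) ^ δ

/-- The weighted Lebesgue constant of the VP interpolation operator at the Chebyshev
nodes of the first kind:
`∥V_n^m∥_u = sup_{|x|≤1} u(x) ∑_{k=1}^n |Φ_{n,k}^m(x)|/u(x_k)`. -/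
noncomputable def vpLeb (γ δ : ℝ) (n m : ℕ) : ℝ :=
  sSup {y | ∃ x ∈ Set.Icc (-1 : ℝ) 1, y =
    jacobiU γ δ x * ∑ k ∈ Finset.Icc 1 n,
      |vpPhi1 n m k x| / jacobiU γ δ (Real.cos (chebNode1 n k))}

/-!
The de la Vallée Poussin kernel `K(θ) = 1/2 + ∑ vpFilter j · cos(jθ)` is the mean of the
Dirichlet kernels of orders `n - m, …, n + m - 1`, so `(2 sin(θ/2))² · 2m · K(θ)` telescopes to
`2 sin(nθ) sin(mθ)`; since `Φ_{n,k}^m(cos t) = (K(t - t_k) + K(t + t_k)) / n`, this is the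
compact form of `Φ_{n,k}^m`. For `n` and `m` even, at `x = 0 = cos(π/2)` both terms of
`Φ_{n,1}^m(0)` have the same sign, whence `|Φ_{n,1}^m(0)| ≥ sin(mπ/(2n)) / (2mn) ≍ n⁻²`.
The first node `x₁ = cos(π/(2n))` is so close to `1` that `u(x₁) ≤ 2^δ (t₁²/2)^γ ≍ n^{-2γ}`,
and `u(0) = 1`, so the single term `k = 1` of the weighted Lebesgue function at `x = 0` is
already of order `n^{2γ-2}`, with a constant depending only on `m / n = μ / ν`.
-/

open Finset Filter

noncomputable def dirichletKernel (r : ℕ) (θ : ℝ) : ℝ :=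
  ∑ j ∈ range (r + 1), (if j = 0 then 1 / 2 else 1) * cos (j * θ)

noncomputable def vpKernel (n m : ℕ) (θ : ℝ) : ℝ :=
  ∑ j ∈ range (n + m), (if j = 0 then 1 / 2 else 1) * vpFilter n m j * cos (j * θ)

theorem two_mul_sin_half_mul_dirichletKernel (r : ℕ) (θ : ℝ) :
    2 * sin (θ / 2) * dirichletKernel r θ = sin ((r + 1 / 2) * θ) := by
  induction r with
  | zero =>
    rw [dirichletKernel, sum_range_one, if_pos rfl, Nat.cast_zero, zero_mul, cos_zero, zero_add]
    ring_nf
  | succ r ih =>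
    rw [dirichletKernel, sum_range_succ, ← dirichletKernel, mul_add, ih, if_neg r.succ_ne_zero,
      one_mul, ← eq_sub_iff_add_eq', sin_sub_sin]
    push_cast
    ring_nf

theorem sin_half_sq_mul_dirichletKernel (r : ℕ) (θ : ℝ) :
    (2 * sin (θ / 2)) ^ 2 * dirichletKernel r θ = cos (r * θ) - cos ((r + 1) * θ) := by
  rw [sq, mul_assoc, two_mul_sin_half_mul_dirichletKernel, mul_right_comm, two_mul_sin_mul_sin]
  congr 2 <;> ring

theorem card_Ico_filter_le (a b j : ℕ) : #{r ∈ Ico a b | j ≤ r} = b - max a j := by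
  rw [← Nat.card_Ico]
  congr 1
  ext r
  simp only [mem_filter, mem_Ico, max_le_iff]
  omega

theorem two_mul_vpFilter {n m j : ℕ} (hm : 0 < m) (hmn : m ≤ n) (hj : j ≤ n + m) :
    2 * m * vpFilter n m j = (n + m - max (n - m) j : ℕ) := by
  unfold vpFilter
  split_ifs with h
  · rw [max_eq_left (by omega), show n + m - (n - m) = 2 * m by omega]
    push_cast; ring
  · rw [max_eq_right (by omega), Nat.cast_sub hj]
    push_cast
    field_simp

theorem two_mul_mul_vpKernel {n m : ℕ} (hm : 0 < m) (hmn : m ≤ n) (θ : ℝ) :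
    2 * m * vpKernel n m θ = ∑ r ∈ Ico (n - m) (n + m), dirichletKernel r θ := by
  have hD : ∀ r ∈ Ico (n - m) (n + m), dirichletKernel r θ =
      ∑ j ∈ range (n + m), if j ≤ r then (if j = 0 then 1 / 2 else 1) * cos (j * θ) else 0 := by
    intro r hr
    rw [← sum_filter, dirichletKernel]
    congr 1
    ext j
    simp only [mem_range, mem_filter, mem_Ico] at hr ⊢
    omega
  rw [sum_congr rfl hD, sum_comm, vpKernel, mul_sum]
  refine sum_congr rfl fun j hj => ?_
  rw [← sum_filter, sum_const, card_Ico_filter_le, nsmul_eq_mul,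
    ← two_mul_vpFilter hm hmn (mem_range.1 hj).le]
  ring

theorem sin_half_sq_mul_vpKernel {n m : ℕ} (hm : 0 < m) (hmn : m ≤ n) (θ : ℝ) :
    (2 * sin (θ / 2)) ^ 2 * (2 * m * vpKernel n m θ) = 2 * sin (n * θ) * sin (m * θ) := by
  rw [two_mul_mul_vpKernel hm hmn, mul_sum]
  simp_rw [sin_half_sq_mul_dirichletKernel]
  calc ∑ r ∈ Ico (n - m) (n + m), (cos (r * θ) - cos ((r + 1) * θ))
      = cos ((n - m : ℕ) * θ) - cos ((n + m : ℕ) * θ) := by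
        rw [← neg_inj, ← sum_neg_distrib, neg_sub,
          ← sum_Ico_sub (fun r : ℕ => cos (r * θ)) (by omega : n - m ≤ n + m)]
        push_cast
        simp only [neg_sub]
    _ = 2 * sin (n * θ) * sin (m * θ) := by
        rw [two_mul_sin_mul_sin]
        push_cast [Nat.cast_sub hmn]
        ring_nf

theorem chebP1_cos {j : ℕ} (hj : j ≠ 0) {t : ℝ} (ht : t ∈ Set.Icc 0 π) :
    chebP1 j (cos t) = √(2 / π) * cos (j * t) := by
  rw [chebP1, if_neg hj, arccos_cos ht.1 ht.2]

theorem vpPhi1_cos_eq_vpKernel {n m k : ℕ} (hmn : m ≤ n) {t : ℝ} (ht : t ∈ Set.Icc 0 π)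
    (htk : chebNode1 n k ∈ Set.Icc 0 π) :
    vpPhi1 n m k (cos t) =
      (vpKernel n m (t - chebNode1 n k) + vpKernel n m (t + chebNode1 n k)) / n := by
  rw [vpPhi1, vpKernel, vpKernel, ← sum_add_distrib, sum_div, mul_sum]
  refine sum_congr rfl fun j _ => ?_
  by_cases hj : j = 0
  · subst hj
    have hπ : √π ^ 2 = π := sq_sqrt pi_pos.le
    simp only [chebP1, vpFilter, if_true, if_pos (show 0 + m ≤ n by omega), Nat.cast_zero,
      zero_mul, cos_zero]
    field_simp
    rw [hπ]
    ring
  · have h2π : √(2 / π) ^ 2 = 2 / π := sq_sqrt (by positivity)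
    rw [chebP1_cos hj ht, chebP1_cos hj htk, if_neg hj, mul_sub, mul_add, cos_sub, cos_add]
    field_simp
    rw [h2π]
    field_simp
    ring

theorem vpKernel_eq_div {n m : ℕ} (hm : 0 < m) (hmn : m ≤ n) {θ : ℝ} (hθ : sin (θ / 2) ≠ 0) :
    vpKernel n m θ = sin (n * θ) * sin (m * θ) / (4 * m * sin (θ / 2) ^ 2) := by
  have := sin_half_sq_mul_vpKernel hm hmn θ
  rw [eq_div_iff (by positivity)]
  linear_combination this / 2

theorem chebNode1_mem_Icc {n k : ℕ} (hk : k ∈ Icc 1 n) : chebNode1 n k ∈ Set.Icc 0 π := by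
  obtain ⟨hk1, hkn⟩ := mem_Icc.1 hk
  have hk1' : (1 : ℝ) ≤ k := by exact_mod_cast hk1
  have hkn' : (k : ℝ) ≤ n := by exact_mod_cast hkn
  rw [chebNode1]
  constructor
  · exact div_nonneg (mul_nonneg (by linarith) pi_pos.le) (by positivity)
  · rw [div_le_iff₀ (by linarith)]
    nlinarith [pi_pos]

theorem natCast_mul_chebNode1 {n : ℕ} (hn : n ≠ 0) (k : ℕ) :
    n * chebNode1 n k = k * π - π / 2 := by
  rw [chebNode1]
  field_simp

theorem vpPhi1_cos_eq {n m k : ℕ} (hm : 0 < m) (hmn : m ≤ n) (hk : k ∈ Icc 1 n) {t : ℝ}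
    (ht : t ∈ Set.Icc 0 π) (hsub : sin ((t - chebNode1 n k) / 2) ≠ 0)
    (hadd : sin ((t + chebNode1 n k) / 2) ≠ 0) :
    vpPhi1 n m k (cos t) = (-1) ^ k / (4 * m * n) * cos (n * t) *
      (sin (m * (t - chebNode1 n k)) / sin ((t - chebNode1 n k) / 2) ^ 2 -
        sin (m * (t + chebNode1 n k)) / sin ((t + chebNode1 n k) / 2) ^ 2) := by
  have hn : n ≠ 0 := by have := mem_Icc.1 hk; omega
  have hsin_sub : sin (n * (t - chebNode1 n k)) = (-1) ^ k * cos (n * t) := by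
    rw [mul_sub, natCast_mul_chebNode1 hn, sub_sub_eq_add_sub, sin_sub_nat_mul_pi,
      sin_add_pi_div_two]
  have hsin_add : sin (n * (t + chebNode1 n k)) = -((-1) ^ k * cos (n * t)) := by
    rw [mul_add, natCast_mul_chebNode1 hn, add_sub_assoc', ← sub_add_eq_add_sub,
      sin_add_nat_mul_pi, sin_sub_pi_div_two]
    ring
  have hm' : (m : ℝ) ≠ 0 := by positivity
  have hn' : (n : ℝ) ≠ 0 := by positivity
  rw [vpPhi1_cos_eq_vpKernel hmn ht (chebNode1_mem_Icc hk), vpKernel_eq_div hm hmn hsub,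
    vpKernel_eq_div hm hmn hadd, hsin_sub, hsin_add]
  field_simp
  ring

theorem sin_div_le_abs_vpPhi1_one_zero {n m : ℕ} (hn : Even n) (hm : Even m) (hm0 : 0 < m)
    (hmn : m ≤ n) : sin (m * π / (2 * n)) / (2 * m * n) ≤ |vpPhi1 n m 1 0| := by
  obtain ⟨p, rfl⟩ := hn
  obtain ⟨q, rfl⟩ := hm
  have hp : (1 : ℝ) ≤ p := by exact_mod_cast (show 1 ≤ p by omega)
  have hπ := pi_pos
  set t₁ := chebNode1 (p + p) 1 with ht₁_def
  set β := ((q + q : ℕ) : ℝ) * π / (2 * (p + p : ℕ)) with hβ_def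
  have hqp : (q : ℝ) ≤ p := by exact_mod_cast (show q ≤ p by omega)
  have ht₁ : t₁ = π / (4 * p) := by rw [ht₁_def, chebNode1]; push_cast; ring
  have ht₁_pos : 0 < t₁ := by rw [ht₁]; positivity
  have ht₁_le : t₁ ≤ π / 4 := by
    rw [ht₁]
    exact div_le_div_of_nonneg_left hπ.le (by positivity) (by linarith)
  have hsub_pos : 0 < sin ((π / 2 - t₁) / 2) := sin_pos_of_pos_of_lt_pi (by linarith) (by linarith)
  have hadd_pos : 0 < sin ((π / 2 + t₁) / 2) := sin_pos_of_pos_of_lt_pi (by linarith) (by linarith)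
  have hβ : 0 ≤ sin β := sin_nonneg_of_nonneg_of_le_pi (by positivity) (by
    rw [hβ_def]; push_cast; rw [div_le_iff₀ (by linarith)]; nlinarith)
  have hcos : cos ((p + p : ℕ) * (π / 2)) = (-1) ^ p := by
    rw [← cos_nat_mul_pi]; push_cast; ring_nf
  have hsin_sub : sin ((q + q : ℕ) * (π / 2 - t₁)) = -((-1) ^ q * sin β) := by
    rw [← sin_nat_mul_pi_sub, ht₁, hβ_def]; congr 1; push_cast; field_simp; ring
  have hsin_add : sin ((q + q : ℕ) * (π / 2 + t₁)) = (-1) ^ q * sin β := by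
    rw [← sin_add_nat_mul_pi, ht₁, hβ_def]; congr 1; push_cast; field_simp; ring
  have hΦ : vpPhi1 (p + p) (q + q) 1 0 = (-1) ^ (p + q) *
      (sin β / (4 * (q + q : ℕ) * (p + p : ℕ)) *
        (1 / sin ((π / 2 - t₁) / 2) ^ 2 + 1 / sin ((π / 2 + t₁) / 2) ^ 2)) := by
    rw [← cos_pi_div_two, vpPhi1_cos_eq hm0 hmn (mem_Icc.2 ⟨le_rfl, by omega⟩)
      ⟨by positivity, by linarith⟩ hsub_pos.ne' hadd_pos.ne', ← ht₁_def, hcos, hsin_sub, hsin_add]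
    ring
  rw [hΦ, abs_mul, abs_pow, abs_neg, abs_one, one_pow, one_mul, abs_of_nonneg (by positivity)]
  have hsub_le := one_le_one_div (by positivity) (sin_sq_le_one ((π / 2 - t₁) / 2))
  have hadd_le := one_le_one_div (by positivity) (sin_sq_le_one ((π / 2 + t₁) / 2))
  calc sin β / (2 * (q + q : ℕ) * (p + p : ℕ))
      = sin β / (4 * (q + q : ℕ) * (p + p : ℕ)) * (1 + 1) := by field_simp; ring
    _ ≤ _ := by gcongr

theorem jacobiU_nonneg (γ δ : ℝ) {x : ℝ} (hx : x ∈ Set.Icc (-1) 1) : 0 ≤ jacobiU γ δ x :=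
  mul_nonneg (rpow_nonneg (by linarith [hx.2]) γ) (rpow_nonneg (by linarith [hx.1]) δ)

theorem jacobiU_pos (γ δ : ℝ) {x : ℝ} (hx : x ∈ Set.Ioo (-1) 1) : 0 < jacobiU γ δ x :=
  mul_pos (rpow_pos_of_pos (by linarith [hx.2]) γ) (rpow_pos_of_pos (by linarith [hx.1]) δ)

theorem jacobiU_cos_le {γ δ : ℝ} (hγ : 0 ≤ γ) (hδ : 0 ≤ δ) (t : ℝ) :
    jacobiU γ δ (cos t) ≤ (t ^ 2 / 2) ^ γ * 2 ^ δ := by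
  have h₁ : 0 ≤ 1 - cos t := by linarith [cos_le_one t]
  have h₂ : 0 ≤ 1 + cos t := by linarith [neg_one_le_cos t]
  exact mul_le_mul
    (rpow_le_rpow h₁ (by linarith [one_sub_sq_div_two_le_cos (x := t)]) hγ)
    (rpow_le_rpow h₂ (by linarith [cos_le_one t]) hδ) (rpow_nonneg h₂ δ) (by positivity)

theorem continuous_jacobiU {γ δ : ℝ} (hγ : 0 ≤ γ) (hδ : 0 ≤ δ) : Continuous (jacobiU γ δ) :=
  ((continuous_rpow_const hγ).comp (continuous_const.sub continuous_id)).mul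
    ((continuous_rpow_const hδ).comp (continuous_const.add continuous_id))

theorem continuous_chebP1 (j : ℕ) : Continuous (chebP1 j) := by
  unfold chebP1
  split_ifs <;> fun_prop

theorem continuous_vpPhi1 (n m k : ℕ) : Continuous (vpPhi1 n m k) := by
  unfold vpPhi1
  have := continuous_chebP1
  fun_prop

theorem jacobiU_mul_abs_vpPhi1_div_le_vpLeb {γ δ : ℝ} (hγ : 0 ≤ γ) (hδ : 0 ≤ δ) {n m k : ℕ}
    (hk : k ∈ Icc 1 n) {x : ℝ} (hx : x ∈ Set.Icc (-1) 1) :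
    jacobiU γ δ x * (|vpPhi1 n m k x| / jacobiU γ δ (cos (chebNode1 n k))) ≤ vpLeb γ δ n m := by
  set F : ℝ → ℝ := fun x => jacobiU γ δ x * ∑ k ∈ Icc 1 n,
    |vpPhi1 n m k x| / jacobiU γ δ (cos (chebNode1 n k))
  have hF : Continuous F := (continuous_jacobiU hγ hδ).mul <|
    continuous_finsetSum _ fun k _ => (continuous_vpPhi1 n m k).abs.div_const _
  obtain ⟨M, hM⟩ := isCompact_Icc.bddAbove_image hF.continuousOn
  have hbdd : BddAbove {y | ∃ x ∈ Set.Icc (-1 : ℝ) 1, y = F x} := by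
    refine ⟨M, ?_⟩
    rintro y ⟨x, hx, rfl⟩
    exact hM ⟨x, hx, rfl⟩
  refine le_trans ?_ (le_csSup hbdd ⟨x, hx, rfl⟩)
  refine mul_le_mul_of_nonneg_left ?_ (jacobiU_nonneg γ δ hx)
  refine single_le_sum (f := fun k => |vpPhi1 n m k x| / jacobiU γ δ (cos (chebNode1 n k)))
    (fun k _ => div_nonneg (abs_nonneg _) (jacobiU_nonneg γ δ ⟨neg_one_le_cos _, cos_le_one _⟩)) hk

theorem sin_div_mul_rpow_le_vpLeb {γ δ : ℝ} (hγ : 0 ≤ γ) (hδ : 0 ≤ δ) {n m : ℕ} (hn : Even n)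
    (hm : Even m) (hm0 : 0 < m) (hmn : m ≤ n) :
    sin (π / 2 * (m / n)) / (2 * (m / n) * 2 ^ δ * (π ^ 2 / 8) ^ γ) * (n : ℝ) ^ (2 * γ - 2) ≤
      vpLeb γ δ n m := by
  have hn0 : (0 : ℝ) < n := by exact_mod_cast hm0.trans_le hmn
  have hπ := pi_pos
  have ht₁ : chebNode1 n 1 = π / (2 * n) := by rw [chebNode1]; ring
  have hcos : cos (chebNode1 n 1) ∈ Set.Ioo (-1) 1 := by
    have hpos : 0 < π / (2 * n) := by positivity
    have hlt : π / (2 * n) < π := by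
      rw [div_lt_iff₀ (by positivity)]
      nlinarith [(by exact_mod_cast hm0.trans_le hmn : (1 : ℝ) ≤ n)]
    rw [ht₁]
    constructor
    · rw [← cos_pi]
      exact cos_lt_cos_of_nonneg_of_le_pi hpos.le le_rfl hlt
    · rw [← cos_zero]
      exact cos_lt_cos_of_nonneg_of_le_pi le_rfl hlt.le hpos
  have hweight : (π / (2 * n)) ^ 2 / 2 = (π ^ 2 / 8) / (n : ℝ) ^ 2 := by field_simp; ring
  have hpow : ((n : ℝ) ^ 2) ^ γ = (n : ℝ) ^ (2 * γ - 2) * n ^ 2 := by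
    rw [rpow_sub hn0, rpow_two, div_mul_cancel₀ _ (by positivity), ← rpow_natCast,
      ← rpow_mul hn0.le]
    norm_num
  calc sin (π / 2 * (m / n)) / (2 * (m / n) * 2 ^ δ * (π ^ 2 / 8) ^ γ) * (n : ℝ) ^ (2 * γ - 2)
      = sin (m * π / (2 * n)) / (2 * m * n) / (((π / (2 * n)) ^ 2 / 2) ^ γ * 2 ^ δ) := by
        rw [hweight, div_rpow (x := π ^ 2 / 8) (by positivity) (by positivity), hpow]
        field_simp
    _ ≤ |vpPhi1 n m 1 0| / ((chebNode1 n 1 ^ 2 / 2) ^ γ * 2 ^ δ) := by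
        rw [ht₁]
        gcongr
        exact sin_div_le_abs_vpPhi1_one_zero hn hm hm0 hmn
    _ ≤ |vpPhi1 n m 1 0| / jacobiU γ δ (cos (chebNode1 n 1)) :=
        div_le_div_of_nonneg_left (abs_nonneg _) (jacobiU_pos γ δ hcos) (jacobiU_cos_le hγ hδ _)
    _ = jacobiU γ δ 0 * (|vpPhi1 n m 1 0| / jacobiU γ δ (cos (chebNode1 n 1))) := by
        simp [jacobiU]
    _ ≤ vpLeb γ δ n m := jacobiU_mul_abs_vpPhi1_div_le_vpLeb hγ hδ
        (mem_Icc.2 ⟨le_rfl, by omega⟩) (by norm_num)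

theorem stmt_15_general (γ δ : ℝ) (hγ : 1 < γ) (hδ : 0 ≤ δ)
    (μ ν : ℕ) (hμ : 0 < μ) (hμν : μ < ν) :
    ∃ C > 0,
      (∀ l : ℕ, 1 ≤ l →
        C * ((2 * l * ν : ℕ) : ℝ) ^ (2 * γ - 2) ≤ vpLeb γ δ (2 * l * ν) (2 * l * μ)) ∧
      (∀ M : ℝ, ∃ l : ℕ, 1 ≤ l ∧ M ≤ vpLeb γ δ (2 * l * ν) (2 * l * μ)) := by
  have hν : (0 : ℝ) < ν := by exact_mod_cast hμ.trans hμν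
  set r : ℝ := μ / ν with hr_def
  have hr : 0 < r := div_pos (by exact_mod_cast hμ) hν
  have hr1 : r < 1 := (div_lt_one hν).2 (by exact_mod_cast hμν)
  set C := sin (π / 2 * r) / (2 * r * 2 ^ δ * (π ^ 2 / 8) ^ γ)
  have hC : 0 < C := div_pos (sin_pos_of_pos_of_lt_pi (by positivity) (by nlinarith [pi_pos]))
    (by positivity)
  have hbound : ∀ l : ℕ, 1 ≤ l →
      C * ((2 * l * ν : ℕ) : ℝ) ^ (2 * γ - 2) ≤ vpLeb γ δ (2 * l * ν) (2 * l * μ) := by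
    intro l hl
    have hratio : ((2 * l * μ : ℕ) : ℝ) / (2 * l * ν : ℕ) = r := by
      have : (l : ℝ) ≠ 0 := by exact_mod_cast (by omega : l ≠ 0)
      rw [hr_def]
      push_cast
      field_simp
    have := sin_div_mul_rpow_le_vpLeb (by linarith : (0 : ℝ) ≤ γ) hδ
      ((even_two_mul l).mul_right ν) ((even_two_mul l).mul_right μ) (Nat.mul_pos (by omega) hμ)
      (Nat.mul_le_mul_left _ hμν.le)
    rwa [hratio] at this
  refine ⟨C, hC, hbound, fun M => ?_⟩
  have hsize : Tendsto (fun l : ℕ => ((2 * l * ν : ℕ) : ℝ)) atTop atTop :=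
    tendsto_atTop_mono (fun l => by exact_mod_cast (by nlinarith : l ≤ 2 * l * ν))
      tendsto_natCast_atTop_atTop
  have hlim := ((tendsto_rpow_atTop (by linarith : 0 < 2 * γ - 2)).comp hsize).const_mul_atTop hC
  obtain ⟨l, hM, hl⟩ := ((hlim.eventually_ge_atTop M).and (eventually_ge_atTop 1)).exists
  exact ⟨l, hl, hM.trans (hbound l hl)⟩

/-- for `γ > 1`, `δ ≥ 0` and degrees `n = 2lν`, `m = 2lμ`
(`0 < μ < ν` coprime), the weighted Lebesgue constants satisfy
`∥V_n^m∥_u ≥ C n^{2γ-2}` with `C > 0` independent of `l`; in particular they are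
unbounded. -/
theorem stmt_15 (γ δ : ℝ) (hγ : 1 < γ) (hδ : 0 ≤ δ)
    (μ ν : ℕ) (hμ : 0 < μ) (hμν : μ < ν) (hcop : Nat.Coprime μ ν) :
    ∃ C > 0,
      (∀ l : ℕ, 1 ≤ l →
        C * ((2 * l * ν : ℕ) : ℝ) ^ (2 * γ - 2) ≤ vpLeb γ δ (2 * l * ν) (2 * l * μ)) ∧
      (∀ M : ℝ, ∃ l : ℕ, 1 ≤ l ∧ M ≤ vpLeb γ δ (2 * l * ν) (2 * l * μ)) :=
  stmt_15_general γ δ hγ hδ μ ν hμ hμν
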